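/- In any multipartite tournament, if a vertex c has in-degree at least 1, then either some 3-Duke has an arc to c, or some vertex in c's partite set is a 2-Duke. -/

import Mathlib

/-!
Let `d` be an in-neighbour of `c` whose out-neighbourhood together with its partite set,
`outUnionPart d`, is maximal under inclusion among in-neighbours of `c`. Then no vertex of
`d`'s partite set eclipses `d`. If `d` is not a 3-Duke, pick `v` outside `d`'s partite set
that `d` cannot reach in three steps. Then `v` pecks every vertex outside its partite set that
`d` reaches in at most two steps, as well as all of `d`'s partite set. If `v` were not in `c`'s
partite set, or if some `x` escaped `v` for two steps, then `v`, respectively `x`, would be an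
in-neighbour of `c` with `outUnionPart` strictly containing `outUnionPart d`.
-/

/-- An orientation of a complete multipartite graph: vertices `V`, partite sets
given as fibers of `part : V → ι`, and `peck` the arc relation. Between any two
vertices in different partite sets there is exactly one arc, and there are no
arcs within a partite set. -/
structure MTour (V : Type*) (ι : Type*) where
  part : V → ι
  peck : V → V → Prop
  complete : ∀ u v, part u ≠ part v → peck u v ∨ peck v u
  inter : ∀ u v, peck u v → part u ≠ part v
  asymm : ∀ u v, peck u v → ¬ peck v u

namespace MTour

variable {V ι : Type*}

/-- There is a directed path of length at most `m` from `d` to `c`. -/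
def hasPath (T : MTour V ι) (m : ℕ) (d c : V) : Prop :=
  ∃ k ≤ m, ∃ f : ℕ → V, f 0 = d ∧ f k = c ∧ ∀ i < k, T.peck (f i) (f (i + 1))

/-- `d` is an `m`-Duke: every vertex in a different partite set is reachable
from `d` by a directed path of length at most `m`. -/
def isDuke (T : MTour V ι) (m : ℕ) (d : V) : Prop :=
  ∀ c, T.part c ≠ T.part d → T.hasPath m d c

/-- `d` is an `m`-King: every other vertex is reachable from `d` by a directed
path of length at most `m`. -/
def isKing (T : MTour V ι) (m : ℕ) (d : V) : Prop :=
  ∀ c, c ≠ d → T.hasPath m d c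

/-- The out-degree of a vertex. -/
noncomputable def outDeg (T : MTour V ι) (v : V) : ℕ :=
  Nat.card {w // T.peck v w}

/-- `e` eclipses `d`: same partite set, `e` pecks everything `d` pecks, and
at least one vertex `d` does not peck. -/
def eclipses (T : MTour V ι) (e d : V) : Prop :=
  T.part e = T.part d ∧ (∀ c, T.peck d c → T.peck e c) ∧ ∃ c, T.peck e c ∧ ¬ T.peck d c

/-- `d` is non-eclipsed: no vertex of its partite set eclipses it. -/
def nonEclipsed (T : MTour V ι) (d : V) : Prop :=
  ∀ e, ¬ T.eclipses e d

/-- Partite set `i` dominates partite set `j`: some vertex of `i` pecks all of `j`. -/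
def Dominates (T : MTour V ι) (i j : ι) : Prop :=
  ∃ v, T.part v = i ∧ ∀ w, T.part w = j → T.peck v w

end MTour

namespace MTour

variable {V ι : Type*} (T : MTour V ι)

theorem peck_of_not_peck {u w : V} (h : T.part u ≠ T.part w) (hn : ¬ T.peck w u) :
    T.peck u w :=
  (T.complete u w h).resolve_right hn

theorem hasPath_self (m : ℕ) (d : V) : T.hasPath m d d :=
  ⟨0, Nat.zero_le m, fun _ => d, rfl, rfl, fun _ h => absurd h (Nat.not_lt_zero _)⟩

def outUnionPart (u : V) : Set V :=
  {w | T.peck u w ∨ T.part w = T.part u}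

variable {T}

theorem hasPath.mono {m n : ℕ} {d c : V} (hmn : m ≤ n) (h : T.hasPath m d c) :
    T.hasPath n d c :=
  let ⟨k, hk, f, h0, hf, hstep⟩ := h
  ⟨k, hk.trans hmn, f, h0, hf, hstep⟩

theorem hasPath.snoc {m : ℕ} {d y x : V} (h : T.hasPath m d y) (hyx : T.peck y x) :
    T.hasPath (m + 1) d x := by
  obtain ⟨k, hk, f, h0, hf, hstep⟩ := h
  refine ⟨k + 1, by omega, fun i => if i ≤ k then f i else x, by simp [h0], by simp, ?_⟩
  intro i hi
  rcases Nat.lt_or_eq_of_le (Nat.le_of_lt_succ hi) with hik | rfl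
  · simpa [hik.le, Nat.succ_le_of_lt hik] using hstep i hik
  · simpa [hf] using hyx

theorem hasPath_of_peck {m : ℕ} {d x : V} (hm : 1 ≤ m) (h : T.peck d x) : T.hasPath m d x :=
  ((T.hasPath_self 0 d).snoc h).mono hm

theorem peck_or_part_eq_of_not_hasPath_two {d x w : V} (hx : ¬ T.hasPath 2 d x)
    (hdw : T.peck d w) : T.peck x w ∨ T.part w = T.part x := by
  by_cases hwx : T.part w = T.part x
  · exact Or.inr hwx
  · exact Or.inl <| T.peck_of_not_peck (Ne.symm hwx)
      fun h => hx ((hasPath_of_peck le_rfl hdw).snoc h)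

theorem peck_of_not_hasPath_two_of_part_eq {d p w : V} (hp : ¬ T.hasPath 2 d p)
    (hpd : T.part p = T.part d) (hdw : T.peck d w) : T.peck p w :=
  (peck_or_part_eq_of_not_hasPath_two hp hdw).resolve_right
    fun h => T.inter d w hdw (hpd ▸ h).symm

theorem peck_of_nonEclipsed {d p w : V} (hd : T.nonEclipsed d) (hpd : T.part p = T.part d)
    (hsub : ∀ w, T.peck d w → T.peck p w) (hpw : T.peck p w) : T.peck d w := by
  by_contra hdw
  exact hd p ⟨hpd, hsub, w, hpw, hdw⟩

theorem peck_of_not_hasPath_succ {m : ℕ} {d v y : V} (hv : ¬ T.hasPath (m + 1) d v)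
    (hy : T.hasPath m d y) (hyv : T.part y ≠ T.part v) : T.peck v y :=
  T.peck_of_not_peck (Ne.symm hyv) fun h => hv (hy.snoc h)

theorem peck_of_part_eq_of_not_hasPath_three {d v p : V} (hd : T.nonEclipsed d)
    (hvd : T.part v ≠ T.part d) (hv : ¬ T.hasPath 3 d v) (hpd : T.part p = T.part d) :
    T.peck v p := by
  have hpv : T.part p ≠ T.part v := hpd ▸ Ne.symm hvd
  by_cases hp : T.hasPath 2 d p
  · exact peck_of_not_hasPath_succ hv hp hpv
  · refine T.peck_of_not_peck hpv.symm fun hpv' => hv (hasPath_of_peck (by norm_num) ?_)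
    exact peck_of_nonEclipsed hd hpd (fun w => peck_of_not_hasPath_two_of_part_eq hp hpd) hpv'

section Maximal

variable {c d : V} (hd : MaximalFor (T.peck · c) T.outUnionPart d)
include hd

theorem nonEclipsed_of_maximalFor : T.nonEclipsed d := by
  rintro e ⟨hed, hsub, w, hew, hdw⟩
  have hle : T.outUnionPart d ⊆ T.outUnionPart e := by
    rintro y (hy | hy)
    · exact Or.inl (hsub y hy)
    · exact Or.inr (hy.trans hed.symm)
  rcases hd.2 (hsub c hd.1) hle (Or.inl hew) with h | h
  · exact hdw h
  · exact T.inter e w hew (hed.trans h.symm)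

variable {v : V} (hvd : T.part v ≠ T.part d) (hv : ¬ T.hasPath 3 d v)
include hvd hv

theorem part_eq_of_not_hasPath_three : T.part v = T.part c := by
  by_contra hvc
  have hle : T.outUnionPart d ⊆ T.outUnionPart v := by
    rintro y (hy | hy)
    · by_cases hyv : T.part y = T.part v
      · exact Or.inr hyv
      · exact Or.inl (peck_of_not_hasPath_succ hv (hasPath_of_peck one_le_two hy) hyv)
    · exact Or.inl (peck_of_part_eq_of_not_hasPath_three (nonEclipsed_of_maximalFor hd) hvd hv hy)
  have hvc' : T.peck v c :=
    peck_of_not_hasPath_succ hv (hasPath_of_peck one_le_two hd.1) (Ne.symm hvc)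
  rcases hd.2 hvc' hle (Or.inr rfl) with h | h
  · exact hv (hasPath_of_peck (by norm_num) h)
  · exact hvd h

theorem isDuke_two_of_not_hasPath_three : T.isDuke 2 v := by
  intro x hxv
  by_contra hx
  have hdx : ¬ T.hasPath 2 d x := fun h =>
    hx (hasPath_of_peck one_le_two (peck_of_not_hasPath_succ hv h hxv))
  have hxv' : T.peck x v := T.peck_of_not_peck hxv fun h => hx (hasPath_of_peck one_le_two h)
  have hxc : T.peck x c :=
    T.peck_of_not_peck (part_eq_of_not_hasPath_three hd hvd hv ▸ hxv)
      fun h => hdx ((hasPath_of_peck le_rfl hd.1).snoc h)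
  have hvP : ∀ p, T.part p = T.part d → T.peck v p := fun p =>
    peck_of_part_eq_of_not_hasPath_three (nonEclipsed_of_maximalFor hd) hvd hv
  have hxd : T.part x ≠ T.part d := fun hxd =>
    hv (hasPath_of_peck (by norm_num) (peck_of_nonEclipsed (nonEclipsed_of_maximalFor hd) hxd
      (fun w => peck_of_not_hasPath_two_of_part_eq hdx hxd) hxv'))
  have hle : T.outUnionPart d ⊆ T.outUnionPart x := by
    rintro y (hy | hy)
    · exact peck_or_part_eq_of_not_hasPath_two hdx hy
    · exact Or.inl <| T.peck_of_not_peck (hy ▸ hxd)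
        fun h => hx ((hasPath_of_peck le_rfl (hvP y hy)).snoc h)
  rcases hd.2 hxc hle (Or.inl hxv') with h | h
  · exact hv (hasPath_of_peck (by norm_num) h)
  · exact hvd h

end Maximal

theorem exists_maximalFor_outUnionPart [Finite V] {c : V} (h : ∃ a, T.peck a c) :
    ∃ d, MaximalFor (T.peck · c) T.outUnionPart d :=
  (Set.toFinite {a | T.peck a c}).exists_maximalFor _ _ h

end MTour

/-- In any multipartite tournament, any vertex that is pecked is either pecked
by a 3-Duke or shares a partite set with a 2-Duke. -/
theorem stmt5 {V ι : Type*} [Finite V] (T : MTour V ι) (c : V)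
    (hpecked : ∃ a, T.peck a c) :
    (∃ d, T.isDuke 3 d ∧ T.peck d c) ∨
    (∃ d, T.part d = T.part c ∧ T.isDuke 2 d) := by
  obtain ⟨d, hd⟩ := MTour.exists_maximalFor_outUnionPart hpecked
  by_cases hduke : T.isDuke 3 d
  · exact Or.inl ⟨d, hduke, hd.1⟩
  obtain ⟨v, hvd, hv⟩ : ∃ v, T.part v ≠ T.part d ∧ ¬ T.hasPath 3 d v := by
    simpa [MTour.isDuke] using hduke
  exact Or.inr ⟨v, MTour.part_eq_of_not_hasPath_three hd hvd hv,
    MTour.isDuke_two_of_not_hasPath_three hd hvd hv⟩
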